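/- arXiv:2312.14531 — 2 statements merged into one kernel-verified Lean document; each statement's English description precedes it below -/
import Mathlib

section
/- For every ε > 0 there is a constant C = C(ε) such that for every positive integer r, every real M₀ ≥ 0 and every real M ≥ 0, one has ∑_{M₀ < t ≤ M₀ + M} min{r^(1/6), gcd(r, t)} ≤ C · r^ε · (M + r^(1/6)), where the sum is over integers t. -/
open Finset

/-- `e x = exp(2πix)`. -/
noncomputable def e (x : ℝ) : ℂ := Complex.exp (2 * Real.pi * Complex.I * x)

/-- Quartic Weyl sum `S₄(α, N) = ∑_{1 ≤ n ≤ N} e(α n⁴)`. -/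
noncomputable def S4 (α N : ℝ) : ℂ := ∑ n ∈ Finset.Icc 1 ⌊N⌋₊, e (α * (n : ℝ) ^ 4)

/-- Incomplete cubic sum `Σ(q; u, v; I) = ∑_{n ∈ I ∩ ℤ} e_q(u n³ + v n)`. -/
noncomputable def SigmaI (q : ℕ) (u v : ℤ) (I : Set ℝ) : ℂ :=
  ∑' n : ℤ, Set.indicator I (fun _ => e (((u * n ^ 3 + v * n : ℤ) : ℝ) / q)) (n : ℝ)

/-- Complete cubic sum `Σ(q; u, v) = ∑_{n mod q} e_q(u n³ + v n)`. -/
noncomputable def SigmaC (q : ℕ) (u v : ℤ) : ℂ :=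
  ∑ n ∈ Finset.range q, e (((u * (n : ℤ) ^ 3 + v * (n : ℤ) : ℤ) : ℝ) / q)

/-- A quadratic irrational: an irrational root of a quadratic with integer coefficients. -/
def IsQuadraticIrrational (α : ℝ) : Prop :=
  Irrational α ∧ ∃ a b c : ℤ, a ≠ 0 ∧ (a : ℝ) * α ^ 2 + (b : ℝ) * α + (c : ℝ) = 0

/-!
Put `A = r ^ (1/6)`. Since `gcd(r, t)` is a divisor of `r` dividing `t`, `min(A, gcd(r, t))` is at
most the sum of `min(A, d)` over the divisors `d` of `r` that divide `t`. Swapping the sums, a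
divisor `d` divides at most `M / d + 2` of the integers `t`, so it contributes at most
`M + 1 + A ≤ M + 2A`. This gives `τ(r) (M + 2A)`, and the divisor bound `τ(r) ≪_ε r ^ ε` finishes.
The divisor bound follows from `τ(n) = ∏ (a_p + 1)`: if `p ^ ε ≥ 2` then
`a_p + 1 ≤ 2 ^ a_p ≤ (p ^ a_p) ^ ε`, and by Bernoulli's inequality each of the boundedly many
primes `p < 2 ^ (1/ε)` costs at most a constant factor.
-/

open Real

lemma exists_add_one_le_mul_pow {c : ℝ} (hc : 1 < c) :
    ∃ K : ℝ, 1 ≤ K ∧ ∀ a : ℕ, (a + 1 : ℝ) ≤ K * c ^ a := by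
  refine ⟨max 1 (c - 1)⁻¹, le_max_left _ _, fun a => ?_⟩
  have hc' : 0 < c - 1 := sub_pos.mpr hc
  have hbern : 1 + a * (c - 1) ≤ c ^ a := one_add_mul_sub_le_pow (by linarith) a
  have hK : (c - 1)⁻¹ ≤ max 1 (c - 1)⁻¹ := le_max_right _ _
  calc (a + 1 : ℝ) = 1 + (c - 1)⁻¹ * (a * (c - 1)) := by field_simp; ring
    _ ≤ max 1 (c - 1)⁻¹ * (1 + a * (c - 1)) := by
      rw [mul_add, mul_one]
      gcongr
      exact le_max_left _ _
    _ ≤ max 1 (c - 1)⁻¹ * c ^ a := by gcongr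

lemma add_one_le_rpow_pow {x ε : ℝ} (hx : 0 ≤ x) (h : 2 ≤ x ^ ε) (a : ℕ) :
    (a + 1 : ℝ) ≤ (x ^ a) ^ ε := by
  rw [← rpow_pow_comm hx]
  calc (a + 1 : ℝ) ≤ 2 ^ a := by exact_mod_cast Nat.lt_two_pow_self
    _ ≤ (x ^ ε) ^ a := by gcongr

theorem exists_card_divisors_le_mul_rpow {ε : ℝ} (hε : 0 < ε) :
    ∃ C : ℝ, 0 ≤ C ∧ ∀ n : ℕ, n ≠ 0 → (#n.divisors : ℝ) ≤ C * (n : ℝ) ^ ε := by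
  obtain ⟨K, hK1, hK⟩ := exists_add_one_le_mul_pow (one_lt_rpow one_lt_two hε)
  -- only the primes `p < B` fail `2 ≤ p ^ ε`; each of them costs at most a factor `K`
  set B : ℕ := ⌈(2 : ℝ) ^ ε⁻¹⌉₊
  refine ⟨K ^ B, by positivity, fun n hn => ?_⟩
  have hfactor : ∀ p ∈ n.primeFactors, ((n.factorization p : ℝ) + 1) ≤
      (if p < B then K else 1) * ((p : ℝ) ^ n.factorization p) ^ ε := by
    intro p hp
    have hp2 : (2 : ℝ) ≤ p := by exact_mod_cast (Nat.prime_of_mem_primeFactors hp).two_le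
    split_ifs with hpB
    · calc ((n.factorization p : ℝ) + 1) ≤ K * (2 ^ ε) ^ n.factorization p := hK _
        _ ≤ K * ((p : ℝ) ^ n.factorization p) ^ ε := by
          rw [← rpow_pow_comm (by positivity)]; gcongr
    · rw [one_mul]
      refine add_one_le_rpow_pow (by positivity) ?_ _
      rw [← rpow_inv_le_iff_of_pos (by norm_num) (by positivity) hε]
      exact (Nat.le_ceil _).trans (by exact_mod_cast not_lt.mp hpB)
  have hsmall : ∏ p ∈ n.primeFactors, (if p < B then K else 1) ≤ K ^ B := by
    rw [prod_ite, prod_const, prod_const_one, mul_one]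
    refine pow_le_pow_right₀ hK1 ((card_le_card fun p hp => ?_).trans (card_range B).le)
    exact mem_range.mpr (mem_filter.mp hp).2
  calc (#n.divisors : ℝ) = ∏ p ∈ n.primeFactors, ((n.factorization p : ℝ) + 1) := by
        rw [Nat.card_divisors hn]; push_cast; rfl
    _ ≤ ∏ p ∈ n.primeFactors, ((if p < B then K else 1) * ((p : ℝ) ^ n.factorization p) ^ ε) :=
        prod_le_prod (fun _ _ => by positivity) hfactor
    _ = (∏ p ∈ n.primeFactors, (if p < B then K else 1)) * (n : ℝ) ^ ε := by
        rw [prod_mul_distrib, finsetProd_rpow _ _ (fun _ _ => by positivity)]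
        congr 2
        exact_mod_cast (Nat.prod_primeFactors_pow_factorization hn).symm
    _ ≤ K ^ B * (n : ℝ) ^ ε := by gcongr

lemma card_filter_dvd_Ioc_le {a b : ℤ} (hab : a ≤ b) {d : ℕ} (hd : 0 < d) :
    (#{t ∈ Ioc a b | (d : ℤ) ∣ t} : ℝ) ≤ (b - a) / d + 1 := by
  have hd' : (0 : ℚ) < d := by exact_mod_cast hd
  have hupper : (⌊(b : ℚ) / (d : ℤ)⌋ : ℚ) ≤ b / d := by exact_mod_cast Int.floor_le _
  have hlower : (a : ℚ) / d - 1 < ⌊(a : ℚ) / (d : ℤ)⌋ := by exact_mod_cast Int.sub_one_lt_floor _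
  have hcount : (#{t ∈ Ioc a b | (d : ℤ) ∣ t} : ℚ) ≤ (b - a) / d + 1 := by
    have hZ := Int.Ioc_filter_dvd_card a b (Int.natCast_pos.mpr hd)
    have hQ : (#{t ∈ Ioc a b | (d : ℤ) ∣ t} : ℚ) =
        max ((⌊(b : ℚ) / (d : ℤ)⌋ : ℚ) - ⌊(a : ℚ) / (d : ℤ)⌋) 0 := by exact_mod_cast hZ
    rw [hQ]
    have hab' : (a : ℚ) ≤ b := by exact_mod_cast hab
    refine max_le ?_ (add_nonneg (div_nonneg (sub_nonneg.mpr hab') hd'.le) zero_le_one)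
    rw [sub_div]
    linarith
  exact_mod_cast hcount

lemma card_filter_dvd_Ioc_mul_min_le {a b : ℤ} (hab : a ≤ b) {d : ℕ} (hd : 0 < d) {A : ℝ}
    (hA : 0 ≤ A) : #{t ∈ Ioc a b | (d : ℤ) ∣ t} * min A (d : ℝ) ≤ b - a + A := by
  have hab' : (0 : ℝ) ≤ b - a := sub_nonneg.mpr (by exact_mod_cast hab)
  have hd' : (0 : ℝ) < d := by exact_mod_cast hd
  calc #{t ∈ Ioc a b | (d : ℤ) ∣ t} * min A (d : ℝ) ≤ ((b - a) / d + 1) * min A (d : ℝ) := by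
        gcongr
        exact card_filter_dvd_Ioc_le hab hd
    _ = (b - a) * (min A (d : ℝ) / d) + min A (d : ℝ) := by ring
    _ ≤ (b - a) * 1 + A := by
        gcongr
        · exact div_le_one_of_le₀ (min_le_right _ _) hd'.le
        · exact min_le_left _ _
    _ = b - a + A := by ring

lemma min_gcd_le_sum_divisors {r : ℕ} (hr : r ≠ 0) {A : ℝ} (hA : 0 ≤ A) (t : ℤ) :
    min A (Int.gcd r t : ℝ) ≤ ∑ d ∈ r.divisors with ((d : ℕ) : ℤ) ∣ t, min A (d : ℝ) := by
  have hgcd : Int.gcd r t ∈ {d ∈ r.divisors | ((d : ℕ) : ℤ) ∣ t} := by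
    refine mem_filter.mpr ⟨Nat.mem_divisors.mpr ⟨?_, hr⟩, Int.gcd_dvd_right _ _⟩
    exact_mod_cast Int.gcd_dvd_left (r : ℤ) t
  exact single_le_sum (f := fun d : ℕ => min A (d : ℝ)) (fun _ _ => by positivity) hgcd

theorem sum_Ioc_min_gcd_le {r : ℕ} (hr : r ≠ 0) {A : ℝ} (hA : 0 ≤ A) {a b : ℤ} (hab : a ≤ b) :
    ∑ t ∈ Ioc a b, min A (Int.gcd r t : ℝ) ≤ #r.divisors * (b - a + A) :=
  calc ∑ t ∈ Ioc a b, min A (Int.gcd r t : ℝ)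
      ≤ ∑ t ∈ Ioc a b, ∑ d ∈ r.divisors with ((d : ℕ) : ℤ) ∣ t, min A (d : ℝ) :=
        sum_le_sum fun t _ => min_gcd_le_sum_divisors hr hA t
    _ = ∑ d ∈ r.divisors, #{t ∈ Ioc a b | (d : ℤ) ∣ t} * min A (d : ℝ) := by
        simp_rw [sum_filter]
        rw [sum_comm]
        simp only [← sum_filter, sum_const, nsmul_eq_mul]
    _ ≤ ∑ _d ∈ r.divisors, (b - a + A) :=
        sum_le_sum fun d hd => card_filter_dvd_Ioc_mul_min_le hab (Nat.pos_of_mem_divisors hd) hA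
    _ = #r.divisors * (b - a + A) := by rw [sum_const, nsmul_eq_mul]

theorem gcd_min_sum_bound (ε : ℝ) (hε : 0 < ε) :
    ∃ C : ℝ, ∀ r : ℕ, 0 < r → ∀ M₀ M : ℝ, 0 ≤ M₀ → 0 ≤ M →
      ∑ t ∈ Finset.Ioc ⌊M₀⌋ ⌊M₀ + M⌋,
          min ((r : ℝ) ^ ((1 : ℝ) / 6)) ((Int.gcd (r : ℤ) t : ℝ)) ≤
        C * (r : ℝ) ^ ε * (M + (r : ℝ) ^ ((1 : ℝ) / 6)) := by
  obtain ⟨C, hC0, hC⟩ := exists_card_divisors_le_mul_rpow hε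
  refine ⟨2 * C, fun r hr M₀ M _ hM => ?_⟩
  have hA : 1 ≤ (r : ℝ) ^ ((1 : ℝ) / 6) := one_le_rpow (by exact_mod_cast hr) (by norm_num)
  have hab : ⌊M₀⌋ ≤ ⌊M₀ + M⌋ := Int.floor_mono (by linarith)
  have hlen : ((⌊M₀ + M⌋ - ⌊M₀⌋ : ℤ) : ℝ) ≤ M + 1 := by
    push_cast
    linarith [Int.floor_le (M₀ + M), Int.sub_one_lt_floor M₀]
  calc _ ≤ #r.divisors * ((⌊M₀ + M⌋ - ⌊M₀⌋ : ℤ) + (r : ℝ) ^ ((1 : ℝ) / 6)) := by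
        exact_mod_cast sum_Ioc_min_gcd_le hr.ne' (by positivity) hab
    _ ≤ C * (r : ℝ) ^ ε * (2 * (M + (r : ℝ) ^ ((1 : ℝ) / 6))) :=
        mul_le_mul (hC r hr.ne') (by linarith) (by positivity) (by positivity)
    _ = 2 * C * (r : ℝ) ^ ε * (M + (r : ℝ) ^ ((1 : ℝ) / 6)) := by ring
end

section
/- Let 0 < ε ≤ 1/3 and let q be a positive integer all of whose prime factors p satisfy p ≤ q^ε. Then q has a divisor q₁ with q^(1/3) ≤ q₁ ≤ q^(1/3 + ε). -/
open Finset

/-! Take the least divisor `d` of `q` with `x ≤ d`. If `d > 1`, write `d = p m` with `p` prime;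
then `m` is a smaller divisor of `q`, so `m < x` and `d < p x ≤ B x`. -/

theorem Nat.exists_dvd_ge_le_mul_of_prime_dvd_le {q : ℕ} (hq : 0 < q) {x B : ℝ}
    (hxq : x ≤ q) (hxB : 1 ≤ x * B) (hB : ∀ p : ℕ, p.Prime → p ∣ q → (p : ℝ) ≤ B) :
    ∃ d : ℕ, d ∣ q ∧ x ≤ d ∧ d ≤ x * B := by
  classical
  have hex : ∃ d : ℕ, d ∣ q ∧ x ≤ d := ⟨q, dvd_rfl, hxq⟩
  obtain ⟨d, ⟨hdq, hxd⟩, hmin⟩ : ∃ d : ℕ, (d ∣ q ∧ x ≤ d) ∧ ∀ m < d, ¬(m ∣ q ∧ x ≤ m) :=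
    ⟨Nat.find hex, Nat.find_spec hex, fun _ => Nat.find_min hex⟩
  refine ⟨d, hdq, hxd, ?_⟩
  rcases eq_or_ne d 1 with rfl | hd1
  · simpa using hxB
  obtain ⟨p, hp, m, rfl⟩ := Nat.exists_prime_and_dvd hd1
  have hmq : m ∣ q := (Dvd.intro_left p rfl).trans hdq
  have hm_pos : 0 < m := Nat.pos_of_dvd_of_pos hmq hq
  have hmx : (m : ℝ) < x :=
    lt_of_not_ge fun hxm => hmin m (lt_mul_left hm_pos hp.one_lt) ⟨hmq, hxm⟩
  have hpB : (p : ℝ) ≤ B := hB p hp ((Dvd.intro m rfl).trans hdq)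
  push_cast
  calc (p : ℝ) * m ≤ B * x := mul_le_mul hpB hmx.le m.cast_nonneg (hpB.trans' p.cast_nonneg)
    _ = x * B := mul_comm B x

theorem smooth_number_divisor_general (ε : ℝ) (hε0 : 0 < ε) (q : ℕ) (hq : 0 < q)
    (hp : ∀ p : ℕ, p.Prime → p ∣ q → (p : ℝ) ≤ (q : ℝ) ^ ε) :
    ∃ q₁ : ℕ, q₁ ∣ q ∧ (q : ℝ) ^ ((1 : ℝ) / 3) ≤ (q₁ : ℝ) ∧
      (q₁ : ℝ) ≤ (q : ℝ) ^ ((1 : ℝ) / 3 + ε) := by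
  have hq1 : (1 : ℝ) ≤ q := by exact_mod_cast hq
  rw [Real.rpow_add (by positivity)]
  refine Nat.exists_dvd_ge_le_mul_of_prime_dvd_le hq ?_ ?_ hp
  · exact Real.rpow_le_self_of_one_le hq1 (by norm_num)
  · exact one_le_mul_of_one_le_of_one_le (Real.one_le_rpow hq1 (by norm_num))
      (Real.one_le_rpow hq1 hε0.le)

theorem smooth_number_divisor (ε : ℝ) (hε0 : 0 < ε) (hε : ε ≤ 1 / 3) (q : ℕ) (hq : 0 < q)
    (hp : ∀ p : ℕ, p.Prime → p ∣ q → (p : ℝ) ≤ (q : ℝ) ^ ε) :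
    ∃ q₁ : ℕ, q₁ ∣ q ∧ (q : ℝ) ^ ((1 : ℝ) / 3) ≤ (q₁ : ℝ) ∧
      (q₁ : ℝ) ≤ (q : ℝ) ^ ((1 : ℝ) / 3 + ε) :=
  smooth_number_divisor_general ε hε0 q hq hp
end
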